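/- Let S be the unilateral shift on ℓ₂ and p_S = 1 - SS*. For every k ≥ 1, the k-th power of the block unitary [[S, p_S], [0, S*]] has the form [[Sᵏ, A], [0, S*ᵏ]] where A is a partial isometry with initial and final space equal to the range of p_{Sᵏ} = 1 - SᵏS*ᵏ. -/

import Mathlib

/-- The block operator $\begin{pmatrix} a & b \\ c & d\end{pmatrix}$ on `H ⊕ H`
(the Hilbert space direct sum `WithLp 2 (H × H)`). -/
noncomputable def blockOp {H : Type*} [NormedAddCommGroup H] [InnerProductSpace ℂ H]
    [CompleteSpace H] (a b c d : H →L[ℂ] H) :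
    WithLp 2 (H × H) →L[ℂ] WithLp 2 (H × H) :=
  ((WithLp.prodContinuousLinearEquiv 2 ℂ H H).symm.toContinuousLinearMap).comp
    ((((a.comp (ContinuousLinearMap.fst ℂ H H)) + (b.comp (ContinuousLinearMap.snd ℂ H H))).prod
      ((c.comp (ContinuousLinearMap.fst ℂ H H)) + (d.comp (ContinuousLinearMap.snd ℂ H H)))).comp
      (WithLp.prodContinuousLinearEquiv 2 ℂ H H).toContinuousLinearMap)

/-- `v` is a partial isometry iff `v*v` is an (orthogonal) projection. -/
def IsPartialIsometry {H : Type*} [NormedAddCommGroup H] [InnerProductSpace ℂ H]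
    [CompleteSpace H] (v : H →L[ℂ] H) : Prop :=
  IsIdempotentElem (star v * v)

/-!
The whole computation takes place in the star ring of operators and uses only that `S` is an
isometry, `S* S = 1`. Then `p = 1 - S S*` satisfies `p S = 0` and `S* p = 0`, so
`p S*ᵐ Sⁿ p` vanishes unless `m = n`, where it equals `p`. The corner entry of the `k`-th power is
`A = ∑_{j<k} Sʲ p S*ᵏ⁻¹⁻ʲ`, which is self-adjoint; in `A²` only the terms with matching exponents
survive, leaving the telescoping sum `∑_{j<k} Sʲ p S*ʲ = 1 - Sᵏ S*ᵏ`, a projection because `Sᵏ`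
is again an isometry. Hence `A* A = A A* = 1 - Sᵏ S*ᵏ`.
-/

open Finset

/-- The upper right entry of `[[a, b], [0, d]] ^ k`. -/
def triangularPowCorner {R : Type*} [Semiring R] (a b d : R) (k : ℕ) : R :=
  ∑ j ∈ range k, a ^ j * b * d ^ (k - 1 - j)

lemma triangularPowCorner_succ {R : Type*} [Semiring R] (a b d : R) (k : ℕ) :
    triangularPowCorner a b d (k + 1) = a * triangularPowCorner a b d k + b * d ^ k := by
  rw [triangularPowCorner, sum_range_succ', triangularPowCorner, mul_sum]
  simp only [pow_succ', mul_assoc, pow_zero, one_mul, Nat.add_sub_cancel, Nat.sub_zero]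
  exact congrArg (· + _) (sum_congr rfl fun j _ => by rw [show k - (j + 1) = k - 1 - j by omega])

lemma star_triangularPowCorner {R : Type*} [Semiring R] [StarRing R] (a : R) {b : R}
    (hb : IsSelfAdjoint b) (k : ℕ) :
    star (triangularPowCorner a b (star a) k) = triangularPowCorner a b (star a) k := by
  rw [triangularPowCorner, star_sum, ← sum_range_reflect]
  refine sum_congr rfl fun j hj => ?_
  rw [mem_range] at hj
  rw [star_mul, star_mul, star_pow, star_pow, star_star, hb.star_eq, mul_assoc,
    show k - 1 - (k - 1 - j) = j by omega]

section Block

variable {H : Type*} [NormedAddCommGroup H] [InnerProductSpace ℂ H] [CompleteSpace H]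

lemma blockOp_one : blockOp (H := H) 1 0 0 1 = 1 := by
  ext x : 1
  simp [blockOp]
  rfl

lemma blockOp_mul (a b c d a' b' c' d' : H →L[ℂ] H) :
    blockOp a b c d * blockOp a' b' c' d' =
      blockOp (a * a' + b * c') (a * b' + b * d') (c * a' + d * c') (c * b' + d * d') := by
  ext x : 1
  simp [blockOp, add_add_add_comm]

lemma blockOp_zero_pow (a b d : H →L[ℂ] H) (k : ℕ) :
    blockOp a b 0 d ^ k = blockOp (a ^ k) (triangularPowCorner a b d k) 0 (d ^ k) := by
  induction k with
  | zero => simp [triangularPowCorner, blockOp_one]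
  | succ k ih =>
    rw [pow_succ', ih, blockOp_mul, triangularPowCorner_succ]
    simp only [mul_zero, zero_mul, add_zero, zero_add, pow_succ']

end Block

lemma sum_pow_mul_one_sub_mul_star_mul_star_pow {R : Type*} [Ring R] [StarRing R] (s : R)
    (k : ℕ) : ∑ j ∈ range k, s ^ j * (1 - s * star s) * star s ^ j = 1 - s ^ k * star s ^ k := by
  induction k with
  | zero => simp
  | succ k ih =>
    rw [sum_range_succ, ih, pow_succ s, pow_succ' (star s)]
    noncomm_ring

section Isometry

variable {R : Type*} [Ring R] [StarRing R] {s : R} (hs : star s * s = 1)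
include hs

lemma star_pow_mul_pow_add (m n : ℕ) : star s ^ m * s ^ (m + n) = s ^ n := by
  induction m with
  | zero => simp
  | succ m ih =>
    rw [pow_succ, Nat.add_right_comm, pow_succ', mul_assoc, ← mul_assoc (star s), hs, one_mul, ih]

lemma star_pow_add_mul_pow (m n : ℕ) : star s ^ (m + n) * s ^ m = star s ^ n := by
  simpa only [star_mul, star_pow, star_star] using congrArg star (star_pow_mul_pow_add hs m n)

lemma one_sub_mul_star_mul_pow {n : ℕ} (hn : n ≠ 0) : (1 - s * star s) * s ^ n = 0 := by
  obtain ⟨m, rfl⟩ := Nat.exists_eq_succ_of_ne_zero hn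
  rw [pow_succ', ← mul_assoc, sub_mul, one_mul, mul_assoc s, hs, mul_one, sub_self, zero_mul]

lemma star_pow_mul_one_sub_mul_star {n : ℕ} (hn : n ≠ 0) : star s ^ n * (1 - s * star s) = 0 := by
  simpa only [star_mul, star_pow, star_sub, star_one, star_star, star_zero]
    using congrArg star (one_sub_mul_star_mul_pow hs hn)

lemma isIdempotentElem_mul_star : IsIdempotentElem (s * star s) := by
  rw [IsIdempotentElem, mul_assoc, ← mul_assoc (star s), hs, one_mul]

lemma isIdempotentElem_one_sub_pow_mul_star_pow (k : ℕ) :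
    IsIdempotentElem (1 - s ^ k * star s ^ k) := by
  have hsk : star (s ^ k) * s ^ k = 1 := by simpa [star_pow] using star_pow_mul_pow_add hs k 0
  simpa only [star_pow] using (isIdempotentElem_mul_star hsk).one_sub

lemma one_sub_mul_star_mul_star_pow_mul_pow_mul (m n : ℕ) :
    (1 - s * star s) * (star s ^ m * s ^ n) * (1 - s * star s) =
      if m = n then 1 - s * star s else 0 := by
  have hp := (isIdempotentElem_mul_star hs).one_sub
  rcases le_total m n with h | h <;> obtain ⟨d, rfl⟩ := Nat.exists_eq_add_of_le h
  · rw [star_pow_mul_pow_add hs]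
    rcases eq_or_ne d 0 with rfl | hd
    · simp [hp.eq]
    · rw [one_sub_mul_star_mul_pow hs hd, zero_mul, if_neg (by omega)]
  · rw [star_pow_add_mul_pow hs, mul_assoc]
    rcases eq_or_ne d 0 with rfl | hd
    · simp [hp.eq]
    · rw [star_pow_mul_one_sub_mul_star hs hd, mul_zero, if_neg (by omega)]

lemma triangularPowCorner_mul_self (k : ℕ) :
    triangularPowCorner s (1 - s * star s) (star s) k *
        triangularPowCorner s (1 - s * star s) (star s) k = 1 - s ^ k * star s ^ k := by
  rw [triangularPowCorner, sum_mul_sum, ← sum_pow_mul_one_sub_mul_star_mul_star_pow]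
  refine sum_congr rfl fun i hi => ?_
  rw [mem_range] at hi
  have hi' : k - 1 - i ∈ range k := mem_range.mpr (by omega)
  calc ∑ j ∈ range k, s ^ i * (1 - s * star s) * star s ^ (k - 1 - i) *
          (s ^ j * (1 - s * star s) * star s ^ (k - 1 - j))
      = ∑ j ∈ range k, s ^ i * ((1 - s * star s) * (star s ^ (k - 1 - i) * s ^ j) *
          (1 - s * star s)) * star s ^ (k - 1 - j) := by simp only [mul_assoc]
    _ = s ^ i * (1 - s * star s) * star s ^ i := by
      simp only [one_sub_mul_star_mul_star_pow_mul_pow_mul hs]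
      rw [sum_eq_single_of_mem _ hi' fun j _ hj => by rw [if_neg (Ne.symm hj)]; simp, if_pos rfl,
        show k - 1 - (k - 1 - i) = i by omega]

end Isometry

section HilbertBasis

open scoped InnerProductSpace

variable {ι 𝕜 E : Type*} [RCLike 𝕜] [NormedAddCommGroup E] [InnerProductSpace 𝕜 E]
  (b : HilbertBasis ι 𝕜 E)

lemma HilbertBasis.ext_inner {x y : E} (h : ∀ i, ⟪b i, x⟫_𝕜 = ⟪b i, y⟫_𝕜) : x = y :=
  b.repr.injective <| lp.ext <| funext fun i => by simpa [b.repr_apply_apply] using h i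

lemma HilbertBasis.continuousLinearMap_ext {F : Type*} [NormedAddCommGroup F] [NormedSpace 𝕜 F]
    {T U : E →L[𝕜] F} (h : ∀ i, T (b i) = U (b i)) : T = U :=
  ContinuousLinearMap.ext_on (Submodule.dense_iff_topologicalClosure_eq_top.mpr b.dense_span)
    (Set.forall_mem_range.mpr h)

lemma star_mul_self_eq_one_of_orthonormal [CompleteSpace E] {T : E →L[𝕜] E}
    (hT : Orthonormal 𝕜 (T ∘ b)) : star T * T = 1 :=
  b.continuousLinearMap_ext fun i => b.ext_inner fun j => by
    rw [mul_apply_eq_comp, ContinuousLinearMap.star_eq_adjoint,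
      ContinuousLinearMap.adjoint_inner_right, one_apply_eq_self]
    classical
    exact (orthonormal_iff_ite.mp hT j i).trans (orthonormal_iff_ite.mp b.orthonormal j i).symm

end HilbertBasis

theorem pow_of_shift_block_unitary_general
    (H : Type*) [NormedAddCommGroup H] [InnerProductSpace ℂ H] [CompleteSpace H]
    (e : HilbertBasis ℕ ℂ H) (S : H →L[ℂ] H) (hS : ∀ i : ℕ, S (e i) = e (i + 1))
    (k : ℕ) :
    ∃ A : H →L[ℂ] H,
      blockOp S (1 - S * star S) 0 (star S) ^ k =
        blockOp (S ^ k) A 0 (star S ^ k) ∧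
      IsPartialIsometry A ∧
      Set.range ⇑(star A * A) = Set.range ⇑(1 - S ^ k * star S ^ k) ∧
      Set.range ⇑(A * star A) = Set.range ⇑(1 - S ^ k * star S ^ k) := by
  have hiso : star S * S = 1 := star_mul_self_eq_one_of_orthonormal e <| by
    simpa only [Function.comp_def, hS] using e.orthonormal.comp _ (add_left_injective 1)
  have hp : IsSelfAdjoint (1 - S * star S) := .sub (.one _) (.mul_star_self S)
  refine ⟨_, blockOp_zero_pow _ _ _ k, ?_⟩
  rw [IsPartialIsometry, star_triangularPowCorner S hp, triangularPowCorner_mul_self hiso]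
  exact ⟨isIdempotentElem_one_sub_pow_mul_star_pow hiso k, rfl, rfl⟩

/-- `S` is the unilateral shift with respect to an orthonormal basis `(e_i)` of `ℓ₂`:
`S e_i = e_{i+1}`. For every `k ≥ 1`, the `k`-th power of `[[S, p_S], [0, S*]]` is of
the form `[[S^k, A], [0, S*^k]]` with `A` a partial isometry whose initial and final
space is the range of `p_{S^k} = 1 - S^k S*^k`. -/
theorem pow_of_shift_block_unitary
    (H : Type*) [NormedAddCommGroup H] [InnerProductSpace ℂ H] [CompleteSpace H]
    (e : HilbertBasis ℕ ℂ H) (S : H →L[ℂ] H) (hS : ∀ i : ℕ, S (e i) = e (i + 1))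
    (k : ℕ) (hk : 1 ≤ k) :
    ∃ A : H →L[ℂ] H,
      blockOp S (1 - S * star S) 0 (star S) ^ k =
        blockOp (S ^ k) A 0 (star S ^ k) ∧
      IsPartialIsometry A ∧
      Set.range ⇑(star A * A) = Set.range ⇑(1 - S ^ k * star S ^ k) ∧
      Set.range ⇑(A * star A) = Set.range ⇑(1 - S ^ k * star S ^ k) :=
  pow_of_shift_block_unitary_general H e S hS k
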